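/- Let 0 < β_L ≤ β_R, λ ∈ ℝ, and for k ∈ (-π, π] define ŝ_-(e^{ik}) := (1/2)(1 - tanh[(1/2)(β - sign(sin k)δ)(λ + cos k)]) with β = (β_L+β_R)/2, δ = (β_R-β_L)/2. Then ŝ_- admits the factorization ŝ_- = b · φ_{β₁,1} · φ_{β₂,-1} almost everywhere on 𝕋, where b is the positive continuous regularized symbol, β₁, β₂ are the purely imaginary jump phases, and φ_{β_j,t_j}(t) = exp(iβ_j arg(-t/t_j)) are pure jump symbols; explicitly, for k ∈ (-π,π], φ_{β₁,1}(e^{ik}) = (τ_R(1)/τ_L(1))^{(k + sign(-k)π)/(2π)} and φ_{β₂,-1}(e^{ik}) = (τ_L(-1)/τ_R(-1))^{k/(2π)}. -/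

import Mathlib

open Real Complex Set

lemma arg_exp_I_aux (θ : ℝ) (hθ : θ ∈ Set.Ioc (-Real.pi) Real.pi) :
    Complex.arg (Complex.exp (Complex.I * (θ : ℂ))) = θ := by
  rw [mul_comm, Complex.exp_mul_I, Complex.arg_cos_add_sin_mul_I hθ]

lemma exp_jump_aux (r x : ℝ) (hr : 0 < r) :
    Complex.exp (Complex.I * (-(Complex.I / (2 * (Real.pi : ℂ))) * ((Real.log r : ℝ) : ℂ)) *
      ((x : ℝ) : ℂ)) = ((r ^ (x / (2 * Real.pi)) : ℝ) : ℂ) := by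
  have hπ : ((Real.pi : ℝ) : ℂ) ≠ 0 := by
    exact_mod_cast (Complex.ofReal_ne_zero.mpr Real.pi_ne_zero)
  have h1 : Complex.I * (-(Complex.I / (2 * (Real.pi : ℂ))) * ((Real.log r : ℝ) : ℂ)) *
      ((x : ℝ) : ℂ) = (((Real.log r * (x / (2 * Real.pi)) : ℝ)) : ℂ) := by
    push_cast
    have h2 : Complex.I * (-(Complex.I / (2 * (Real.pi : ℂ))) * ((Real.log r : ℝ) : ℂ)) *
        ((x : ℝ) : ℂ) = (Complex.I * Complex.I) *
          (-(1 / (2 * (Real.pi : ℂ))) * ((Real.log r : ℝ) : ℂ)) * ((x : ℝ) : ℂ) := by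
      ring
    rw [h2, Complex.I_mul_I]
    field_simp
  rw [h1, ← Complex.ofReal_exp, Real.rpow_def_of_pos hr]

lemma tanh_lt_one_aux (x : ℝ) : Real.tanh x < 1 := by
  rw [Real.tanh_eq_sinh_div_cosh, div_lt_one (Real.cosh_pos _)]
  exact Real.sinh_lt_cosh _

lemma exp_collect_pos (A B P Q T e : ℝ) (hA : 0 < A) (hB : 0 < B) (hP : 0 < P) (hQ : 0 < Q) :
    (A * Q / (B * P)) ^ e * (Real.sqrt (B / A) * T) * (B / A) ^ (e - 1/2) * (P / Q) ^ e = T := by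
  have h1 : 0 < A * Q / (B * P) := by positivity
  have h2 : (0 : ℝ) < B / A := by positivity
  have h3 : (0 : ℝ) < P / Q := by positivity
  rw [Real.sqrt_eq_rpow, Real.rpow_def_of_pos h1, Real.rpow_def_of_pos h2,
    Real.rpow_def_of_pos h2, Real.rpow_def_of_pos h3,
    Real.log_div hB.ne' hA.ne', Real.log_div hP.ne' hQ.ne',
    Real.log_div (by positivity) (by positivity),
    Real.log_mul hA.ne' hQ.ne', Real.log_mul hB.ne' hP.ne']
  have comb : ∀ a b c d : ℝ, Real.exp a * (Real.exp b * T) * Real.exp c * Real.exp d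
      = Real.exp (a + b + c + d) * T := fun a b c d => by
    rw [Real.exp_add, Real.exp_add, Real.exp_add]; ring
  rw [comb]
  have hz : (Real.log A + Real.log Q - (Real.log B + Real.log P)) * e
      + (Real.log B - Real.log A) * (1 / 2)
      + (Real.log B - Real.log A) * (e - 1 / 2) + (Real.log P - Real.log Q) * e = 0 := by ring
  rw [hz, Real.exp_zero, one_mul]

lemma exp_collect_neg (A B P Q T e : ℝ) (hA : 0 < A) (hB : 0 < B) (hP : 0 < P) (hQ : 0 < Q) :
    (A * Q / (B * P)) ^ e * (Real.sqrt (A / B) * T) * (B / A) ^ (e + 1/2) * (P / Q) ^ e = T := by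
  have h1 : 0 < A * Q / (B * P) := by positivity
  have h2 : (0 : ℝ) < B / A := by positivity
  have h2' : (0 : ℝ) < A / B := by positivity
  have h3 : (0 : ℝ) < P / Q := by positivity
  rw [Real.sqrt_eq_rpow, Real.rpow_def_of_pos h1, Real.rpow_def_of_pos h2',
    Real.rpow_def_of_pos h2, Real.rpow_def_of_pos h3,
    Real.log_div hB.ne' hA.ne', Real.log_div hP.ne' hQ.ne',
    Real.log_div hA.ne' hB.ne', Real.log_div (by positivity : (0:ℝ) < A*Q).ne' (by positivity : (0:ℝ) < B*P).ne',
    Real.log_mul hA.ne' hQ.ne', Real.log_mul hB.ne' hP.ne']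
  have comb : ∀ a b c d : ℝ, Real.exp a * (Real.exp b * T) * Real.exp c * Real.exp d
      = Real.exp (a + b + c + d) * T := fun a b c d => by
    rw [Real.exp_add, Real.exp_add, Real.exp_add]; ring
  rw [comb]
  have hz : (Real.log A + Real.log Q - (Real.log B + Real.log P)) * e
      + (Real.log A - Real.log B) * (1 / 2)
      + (Real.log B - Real.log A) * (e + 1 / 2) + (Real.log P - Real.log Q) * e = 0 := by ring
  rw [hz, Real.exp_zero, one_mul]

/-- Fisher-Hartwig factorization of the NESS EFP symbol: ŝ₋ = b · φ_{β₁,1} · φ_{β₂,-1}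
almost everywhere on 𝕋 (i.e. for every angle k ∈ (-π,π] with k ≠ 0), where b is the
positive continuous regularized symbol, β₁, β₂ are the purely imaginary jump phases,
and the pure jump symbols φ_{β_j,t_j}(t) = exp(iβ_j arg(-t/t_j)) are given explicitly
by φ_{β₁,1}(e^{ik}) = (τ_R(1)/τ_L(1))^{(k + sign(-k)π)/(2π)} and
φ_{β₂,-1}(e^{ik}) = (τ_L(-1)/τ_R(-1))^{k/(2π)}. -/
theorem symbol_factorization (βL βR lam : ℝ) (h0 : 0 < βL) (hLR : βL ≤ βR) :
    let β := (βL + βR) / 2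
    let δ := (βR - βL) / 2
    let sgn : ℝ → ℝ := fun x => if 0 ≤ x then 1 else -1
    let s : ℝ → ℝ := fun k =>
      (1 - Real.tanh ((β - sgn (Real.sin k) * δ) * (lam + Real.cos k) / 2)) / 2
    let τ : ℝ → ℝ → ℝ := fun c k => (1 - Real.tanh (c * (lam + Real.cos k) / 2)) / 2
    let C : ℝ := τ βL 0 * τ βR Real.pi / (τ βR 0 * τ βL Real.pi)
    let b : ℝ → ℝ := fun k => C ^ (k / (2 * Real.pi)) *
      (if 0 ≤ k then Real.sqrt (τ βR 0 / τ βL 0) * τ βL k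
       else Real.sqrt (τ βL 0 / τ βR 0) * τ βR k)
    let φ₁ : ℝ → ℝ := fun k => (τ βR 0 / τ βL 0) ^ ((k + sgn (-k) * Real.pi) / (2 * Real.pi))
    let φ₂ : ℝ → ℝ := fun k => (τ βL Real.pi / τ βR Real.pi) ^ (k / (2 * Real.pi))
    let β₁ : ℂ := -(Complex.I / (2 * (Real.pi : ℂ))) * ((Real.log (τ βR 0 / τ βL 0) : ℝ) : ℂ)
    let β₂ : ℂ := -(Complex.I / (2 * (Real.pi : ℂ))) *
      ((Real.log (τ βL Real.pi / τ βR Real.pi) : ℝ) : ℂ)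
    (∀ k ∈ Set.Ioc (-Real.pi) Real.pi,
      Complex.exp (Complex.I * β₁ *
          ((Complex.arg (-(Complex.exp (Complex.I * k)) / 1) : ℝ) : ℂ)) = ((φ₁ k : ℝ) : ℂ) ∧
      Complex.exp (Complex.I * β₂ *
          ((Complex.arg (-(Complex.exp (Complex.I * k)) / (-1)) : ℝ) : ℂ)) = ((φ₂ k : ℝ) : ℂ)) ∧
    (∀ k ∈ Set.Ioc (-Real.pi) Real.pi, k ≠ 0 → s k = b k * φ₁ k * φ₂ k) := by
  intro β δ sgn s τ C b φ₁ φ₂ β₁ β₂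
  have hπ := Real.pi_pos
  have tpos : ∀ c x, 0 < τ c x := by
    intro c x
    have h := tanh_lt_one_aux (c * (lam + Real.cos x) / 2)
    simp only [τ]
    linarith
  have hA := tpos βL 0
  have hB := tpos βR 0
  have hP := tpos βL Real.pi
  have hQ := tpos βR Real.pi
  constructor
  · intro k hk
    constructor
    · -- φ₁
      rcases le_or_gt k 0 with hk0 | hk0
      · have harg : Complex.arg (-(Complex.exp (Complex.I * k)) / 1) = k + Real.pi := by
          have he : -(Complex.exp (Complex.I * (k : ℂ))) / 1
              = Complex.exp (Complex.I * ((k + Real.pi : ℝ) : ℂ)) := by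
            push_cast
            rw [div_one, mul_add, Complex.exp_add, mul_comm Complex.I ((Real.pi : ℝ) : ℂ),
              Complex.exp_pi_mul_I]
            ring
          rw [he, arg_exp_I_aux _ ⟨by linarith [hk.1, hk.2], by linarith [hk.1, hk.2]⟩]
        rw [harg]
        have hsgn : sgn (-k) = 1 := if_pos (by linarith)
        simp only [φ₁, β₁, hsgn, one_mul]
        exact exp_jump_aux _ (k + Real.pi) (div_pos hB hA)
      · have harg : Complex.arg (-(Complex.exp (Complex.I * k)) / 1) = k - Real.pi := by
          have he : -(Complex.exp (Complex.I * (k : ℂ))) / 1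
              = Complex.exp (Complex.I * ((k - Real.pi : ℝ) : ℂ)) := by
            push_cast
            rw [div_one, mul_sub, Complex.exp_sub, mul_comm Complex.I ((Real.pi : ℝ) : ℂ),
              Complex.exp_pi_mul_I]
            ring
          rw [he, arg_exp_I_aux _ ⟨by linarith [hk.1, hk.2], by linarith [hk.1, hk.2]⟩]
        rw [harg]
        have hsgn : sgn (-k) = -1 := if_neg (by push_neg; linarith)
        simp only [φ₁, β₁, hsgn, neg_one_mul]
        rw [show k + -Real.pi = k - Real.pi from by ring]
        exact exp_jump_aux _ (k - Real.pi) (div_pos hB hA)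
    · -- φ₂
      have harg : Complex.arg (-(Complex.exp (Complex.I * k)) / (-1)) = k := by
        have he : -(Complex.exp (Complex.I * (k : ℂ))) / (-1)
            = Complex.exp (Complex.I * (k : ℂ)) := by ring
        rw [he, arg_exp_I_aux _ hk]
      rw [harg]
      simp only [φ₂, β₂]
      exact exp_jump_aux _ k (div_pos hP hQ)
  · intro k hk hk0
    rcases lt_or_gt_of_ne hk0 with hneg | hpos
    · -- k < 0 : s k = τ βR k
      have hsin : Real.sin k < 0 := Real.sin_neg_of_neg_of_neg_pi_lt hneg hk.1
      have hs : s k = τ βR k := by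
        simp only [s, τ, sgn, if_neg (not_le.mpr hsin)]
        norm_num
        ring_nf
        congr 1
        simp only [β, δ]
        ring
      have hsgnk : sgn (-k) = 1 := if_pos (by linarith)
      simp only [hs, b, φ₁, φ₂, C, hsgnk, if_neg (not_le.mpr hneg), one_mul]
      have hexp : (k + Real.pi) / (2 * Real.pi) = k / (2 * Real.pi) + 1/2 := by
        field_simp
      rw [hexp]
      exact (exp_collect_neg _ _ _ _ _ _ hA hB hP hQ).symm
    · -- k > 0 : s k = τ βL k
      have hsin : 0 ≤ Real.sin k := Real.sin_nonneg_of_nonneg_of_le_pi hpos.le hk.2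
      have hs : s k = τ βL k := by
        simp only [s, τ, sgn, if_pos hsin]
        norm_num
        ring_nf
        congr 1
        simp only [β, δ]
        ring
      have hsgnk : sgn (-k) = -1 := if_neg (by push_neg; linarith)
      simp only [hs, b, φ₁, φ₂, C, hsgnk, if_pos hpos.le, neg_one_mul]
      have hexp : (k + -Real.pi) / (2 * Real.pi) = k / (2 * Real.pi) - 1/2 := by
        field_simp
        ring
      rw [hexp]
      exact (exp_collect_pos _ _ _ _ _ _ hA hB hP hQ).symm
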